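/- Let P be a finite poset, k a field, and P' a convex full subposet of P. For a persistence module M over P', let M̂ denote its extension by zero to P (M̂(p) = M(p) for p ∈ P' and M̂(p) = 0 otherwise; this is a well-defined persistence module over P since P' is convex). If f : X → M is an interval cover of M over P', then the extension by zero f̂ : X̂ → M̂ is an interval cover of M̂ over P. -/

import Mathlib

open CategoryTheory CategoryTheory.Limits

attribute [local instance] CategoryTheory.Limits.HasFiniteBiproducts.of_hasFiniteProducts

section Posets

variable {P : Type} [PartialOrder P]

/-- Zigzag connectivity of two elements of a subset `S` of a poset: they are linked by a
zigzag of comparable pairs inside `S`. -/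
def ZigzagConnIn (S : Set P) (a b : S) : Prop :=
  Relation.ReflTransGen (fun u v : S => (u : P) ≤ v ∨ (v : P) ≤ u) a b

/-- A subset of a poset is convex if `x ≤ z ≤ y` with `x, y` in the subset implies `z` is. -/
def IsConvex (S : Set P) : Prop :=
  ∀ ⦃x y z : P⦄, x ∈ S → y ∈ S → x ≤ z → z ≤ y → z ∈ S

/-- An interval of a poset: a nonempty, convex, zigzag-connected subset. -/
def IsIntervalSet (S : Set P) : Prop :=
  S.Nonempty ∧ IsConvex S ∧ ∀ a b : S, ZigzagConnIn S a b

end Posets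

section IntervalModules

variable (k : Type) [Field k] {P : Type} [PartialOrder P]

open Classical in
/-- The linear map between the fibers of the interval module. -/
noncomputable def intervalModuleAux (S : Set P) (p q : P) :
    ↥(if p ∈ S then (⊤ : Submodule k k) else ⊥) →ₗ[k]
      ↥(if q ∈ S then (⊤ : Submodule k k) else ⊥) where
  toFun x := ⟨(if p ∈ S ∧ q ∈ S then (1 : k) else 0) * x.1, by
    by_cases hq : q ∈ S
    · rw [if_pos hq]; exact Submodule.mem_top
    · rw [if_neg hq, Submodule.mem_bot]; simp [hq]⟩
  map_add' x y := by ext; simp [mul_add]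
  map_smul' c x := by ext; simp

open Classical in
/-- The interval module `k_S` associated to a convex subset `S` of a poset `P`:
it is `k` at points of `S`, `0` elsewhere, with identity structure maps inside `S`. -/
noncomputable def intervalModule (S : Set P) (hS : IsConvex S) : P ⥤ ModuleCat.{0} k where
  obj p := ModuleCat.of k ↥(if p ∈ S then (⊤ : Submodule k k) else ⊥)
  map {p q} _ := ModuleCat.ofHom (intervalModuleAux k S p q)
  map_id p := by
    apply ModuleCat.hom_ext
    apply LinearMap.ext
    rintro ⟨x, hx⟩
    apply Subtype.ext
    show (if p ∈ S ∧ p ∈ S then (1 : k) else 0) * x = x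
    by_cases hp : p ∈ S
    · simp [hp]
    · rw [if_neg hp] at hx
      simp [hp, (Submodule.mem_bot k).mp hx]
  map_comp {p q r} f g := by
    apply ModuleCat.hom_ext
    apply LinearMap.ext
    rintro ⟨x, hx⟩
    apply Subtype.ext
    show (if p ∈ S ∧ r ∈ S then (1 : k) else 0) * x
      = (if q ∈ S ∧ r ∈ S then (1 : k) else 0) * ((if p ∈ S ∧ q ∈ S then (1 : k) else 0) * x)
    by_cases hp : p ∈ S
    · by_cases hr : r ∈ S
      · have hq : q ∈ S := hS hp hr (leOfHom f) (leOfHom g)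
        simp [hp, hq, hr]
      · simp [hr]
    · rw [if_neg hp] at hx
      simp [(Submodule.mem_bot k).mp hx]

/-- A persistence module is an interval module if it is isomorphic to `k_S` for some
interval `S`. -/
def IsIntervalModule (M : P ⥤ ModuleCat.{0} k) : Prop :=
  ∃ (S : Set P) (hS : IsIntervalSet S), Nonempty (M ≅ intervalModule k S hS.2.1)

/-- A persistence module is interval-decomposable if it is isomorphic to a finite direct sum
of interval modules. -/
def IsIntervalDecomposable (M : P ⥤ ModuleCat.{0} k) : Prop :=
  ∃ (n : ℕ) (J : Fin n → (P ⥤ ModuleCat.{0} k)),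
    (∀ i, IsIntervalModule k (J i)) ∧ Nonempty (M ≅ ⨁ J)

/-- The support of a persistence module. -/
def moduleSupport (M : P ⥤ ModuleCat.{0} k) : Set P := {p : P | ¬ IsZero (M.obj p)}

/-- A persistence module valued in finite-dimensional vector spaces. -/
def PointwiseFinite (M : P ⥤ ModuleCat.{0} k) : Prop :=
  ∀ p : P, FiniteDimensional k (M.obj p)

end IntervalModules

section Approximations

variable {C : Type*} [Category C]

/-- `f : X ⟶ M` is a right `𝒳`-approximation of `M` if `X ∈ 𝒳` and every morphism
from an object of `𝒳` to `M` factors through `f`. -/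
def IsRightApproximation (𝒳 : C → Prop) {X M : C} (f : X ⟶ M) : Prop :=
  𝒳 X ∧ ∀ ⦃Y : C⦄ (g : Y ⟶ M), 𝒳 Y → ∃ h : Y ⟶ X, h ≫ f = g

/-- `f : X ⟶ M` is right minimal if every endomorphism `g` of `X` with `f ∘ g = f`
is an isomorphism. -/
def IsRightMinimal {X M : C} (f : X ⟶ M) : Prop :=
  ∀ g : X ⟶ X, g ≫ f = f → IsIso g

end Approximations

/-- An interval cover: a right minimal approximation by interval-decomposable modules. -/
def IsIntervalCover (k : Type) [Field k] {P : Type} [PartialOrder P]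
    {X M : P ⥤ ModuleCat.{0} k} (f : X ⟶ M) : Prop :=
  IsRightApproximation (IsIntervalDecomposable k) f ∧ IsRightMinimal f

section Resolutions

variable {C : Type*} [Category C] [Limits.HasZeroMorphisms C]

/-- `M` admits a resolution `0 ⟶ J_n ⟶ ⋯ ⟶ J_1 ⟶ J_0 ⟶ M ⟶ 0` of length `n` by objects
of `𝒳`: an exact sequence in which every `J_i` lies in `𝒳`.  (The data is encoded by an
`ℕ`-indexed complex which vanishes in degrees `> n` and is exact everywhere.) -/
def HasResolutionOfLength (𝒳 : C → Prop) (n : ℕ) (M : C) : Prop :=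
  ∃ (J : ℕ → C) (d : ∀ i, J (i + 1) ⟶ J i) (f : J 0 ⟶ M) (w0 : d 0 ≫ f = 0)
    (w : ∀ i, d (i + 1) ≫ d i = 0),
    (∀ i, i ≤ n → 𝒳 (J i)) ∧ (∀ i, n < i → IsZero (J i)) ∧
    Epi f ∧ (ShortComplex.mk (d 0) f w0).Exact ∧
    ∀ i, (ShortComplex.mk (d (i + 1)) (d i) (w i)).Exact

end Resolutions

section ExtensionByZero

variable (k : Type) [Field k] {P : Type} [PartialOrder P] (P' : Set P)

open Classical in
/-- Fibers of the extension by zero. -/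
noncomputable def extObj (M : ↥P' ⥤ ModuleCat.{0} k) (p : P) : ModuleCat.{0} k :=
  if h : p ∈ P' then M.obj ⟨p, h⟩ else ModuleCat.of k PUnit

lemma extObj_pos (M : ↥P' ⥤ ModuleCat.{0} k) {p : P} (hp : p ∈ P') :
    extObj k P' M p = M.obj ⟨p, hp⟩ := dif_pos hp

lemma extObj_isZero (M : ↥P' ⥤ ModuleCat.{0} k) {p : P} (hp : p ∉ P') :
    CategoryTheory.Limits.IsZero (extObj k P' M p) := by
  rw [extObj, dif_neg hp]
  exact ModuleCat.isZero_of_subsingleton _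

open Classical in
/-- Structure maps of the extension by zero. -/
noncomputable def extMap (M : ↥P' ⥤ ModuleCat.{0} k) (p q : P) (hpq : p ≤ q) :
    extObj k P' M p ⟶ extObj k P' M q :=
  if hp : p ∈ P' then
    if hq : q ∈ P' then
      eqToHom (extObj_pos k P' M hp) ≫
        M.map (homOfLE (show (⟨p, hp⟩ : ↥P') ≤ ⟨q, hq⟩ from hpq)) ≫
          eqToHom (extObj_pos k P' M hq).symm
    else 0
  else 0

lemma extMap_id (M : ↥P' ⥤ ModuleCat.{0} k) (p : P) (h : p ≤ p) :
    extMap k P' M p p h = 𝟙 (extObj k P' M p) := by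
  by_cases hp : p ∈ P'
  · simp only [extMap, dif_pos hp]
    have : homOfLE (show (⟨p, hp⟩ : ↥P') ≤ ⟨p, hp⟩ from h) = 𝟙 _ := Subsingleton.elim _ _
    rw [this, M.map_id]
    simp
  · simp only [extMap, dif_neg hp]
    exact (extObj_isZero k P' M hp).eq_of_src _ _

lemma extMap_comp (hconv : IsConvex P') (M : ↥P' ⥤ ModuleCat.{0} k) (p q r : P)
    (hpq : p ≤ q) (hqr : q ≤ r) :
    extMap k P' M p r (hpq.trans hqr) = extMap k P' M p q hpq ≫ extMap k P' M q r hqr := by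
  by_cases hp : p ∈ P'
  · by_cases hr : r ∈ P'
    · have hq : q ∈ P' := hconv hp hr hpq hqr
      simp only [extMap, dif_pos hp, dif_pos hq, dif_pos hr]
      have : homOfLE (show (⟨p, hp⟩ : ↥P') ≤ ⟨r, hr⟩ from hpq.trans hqr) =
          homOfLE (show (⟨p, hp⟩ : ↥P') ≤ ⟨q, hq⟩ from hpq) ≫
            homOfLE (show (⟨q, hq⟩ : ↥P') ≤ ⟨r, hr⟩ from hqr) := Subsingleton.elim _ _
      rw [this, M.map_comp]
      simp
    · by_cases hq : q ∈ P'
      · simp only [extMap, dif_pos hp, dif_pos hq, dif_neg hr]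
        simp
      · simp only [extMap, dif_pos hp, dif_neg hq, dif_neg hr]
        simp
  · simp only [extMap, dif_neg hp]
    exact (extObj_isZero k P' M hp).eq_of_src _ _

/-- The extension by zero of a persistence module over a convex full subposet `P'` of `P`:
it agrees with `M` on `P'` and vanishes outside of `P'`. -/
noncomputable def extendByZero (hconv : IsConvex P') (M : ↥P' ⥤ ModuleCat.{0} k) :
    P ⥤ ModuleCat.{0} k where
  obj p := extObj k P' M p
  map {p q} f := extMap k P' M p q (leOfHom f)
  map_id p := extMap_id k P' M p le_rfl
  map_comp {p q r} f g := extMap_comp k P' hconv M p q r (leOfHom f) (leOfHom g)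

open Classical in
/-- The components of the extension by zero of a morphism. -/
noncomputable def extHomApp {X M : ↥P' ⥤ ModuleCat.{0} k} (f : X ⟶ M) (p : P) :
    extObj k P' X p ⟶ extObj k P' M p :=
  if hp : p ∈ P' then
    eqToHom (extObj_pos k P' X hp) ≫ f.app ⟨p, hp⟩ ≫ eqToHom (extObj_pos k P' M hp).symm
  else 0

/-- The extension by zero of a morphism of persistence modules over a convex full
subposet. -/
noncomputable def extendByZeroHom (hconv : IsConvex P') {X M : ↥P' ⥤ ModuleCat.{0} k}
    (f : X ⟶ M) : extendByZero k P' hconv X ⟶ extendByZero k P' hconv M where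
  app p := extHomApp k P' f p
  naturality p q g := by
    show extMap k P' X p q (leOfHom g) ≫ extHomApp k P' f q =
      extHomApp k P' f p ≫ extMap k P' M p q (leOfHom g)
    by_cases hq : q ∈ P'
    · by_cases hp : p ∈ P'
      · simp only [extMap, extHomApp, dif_pos hp, dif_pos hq]
        simp only [CategoryTheory.Category.assoc, CategoryTheory.eqToHom_trans_assoc,
          CategoryTheory.eqToHom_refl, CategoryTheory.Category.id_comp]
        rw [CategoryTheory.NatTrans.naturality_assoc]
      · exact (extObj_isZero k P' X hp).eq_of_src _ _
    · exact ((extObj_isZero k P' M hq).eq_of_tgt _ _)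

end ExtensionByZero

/-!
Extension by zero `E` is fully faithful, since restricting back to `P'` undoes it; so right
minimality of `E f` follows formally from that of `f`. Being additive and sending `k_S` to
`k_S` read in `P`, `E` preserves interval-decomposability.

For the approximation property it suffices to lift morphisms `g : k_S ⟶ E M` out of interval
modules over `P`. Because the structure maps of `k_S` are isomorphisms inside `S` and `E M`
vanishes off `P'`, such a `g` vanishes at every point of `S` above a point of `S \ P'`. Hence
`g` factors through the quotient `k_S ⟶ k_T`, where `T` is the set of points of `S` whose
down-set in `S` lies in `P'`. As `T ⊆ P'`, the factor is `E g'` for some `g' : k_T ⟶ M`, and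
`g'` lifts along `f` because `k_T` is the direct sum of the interval modules of the finitely many
zigzag components of the convex set `T`.
-/

theorem exists_lift_of_sum_comp_eq_id {C : Type*} [Category C] [Preadditive C] {ι : Type*}
    [Fintype ι] {X M Y : C} {Z : ι → C} (f : X ⟶ M) (p : ∀ i, Y ⟶ Z i) (e : ∀ i, Z i ⟶ Y)
    (hpe : ∑ i, p i ≫ e i = 𝟙 Y) (g : Y ⟶ M) (hg : ∀ i, ∃ h, h ≫ f = e i ≫ g) :
    ∃ h, h ≫ f = g := by
  choose h hh using hg
  refine ⟨∑ i, p i ≫ h i, ?_⟩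
  simp only [Preadditive.sum_comp, Category.assoc, hh]
  simp only [← Category.assoc, ← Preadditive.sum_comp, hpe, Category.id_comp]

namespace ZigzagConnIn

variable {Q : Type} [PartialOrder Q] {S : Set Q}

theorem symm {a b : S} (h : ZigzagConnIn S a b) : ZigzagConnIn S b a :=
  Relation.reflTransGen_swap.mp (Relation.ReflTransGen.mono (fun _ _ => Or.symm) _ _ h)

theorem trans {a b c : S} (hab : ZigzagConnIn S a b) (hbc : ZigzagConnIn S b c) :
    ZigzagConnIn S a c :=
  Relation.ReflTransGen.trans hab hbc

theorem restrict {T : Set Q}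
    (hT : ∀ ⦃x y⦄, x ∈ T → y ∈ S → (x ≤ y ∨ y ≤ x) → y ∈ T) {a b : S}
    (h : ZigzagConnIn S a b) (ha : (a : Q) ∈ T) :
    ∃ hb : (b : Q) ∈ T, ZigzagConnIn T ⟨a, ha⟩ ⟨b, hb⟩ := by
  induction h with
  | refl => exact ⟨ha, Relation.ReflTransGen.refl⟩
  | tail _ hstep ih =>
    obtain ⟨hc, hpath⟩ := ih
    exact ⟨hT hc (Subtype.prop _) hstep, hpath.tail hstep⟩

end ZigzagConnIn

section ZigzagComponents

variable {Q : Type} [PartialOrder Q]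

def zigzagComponent (S : Set Q) (a : S) : Set Q :=
  {q | ∃ h : q ∈ S, ZigzagConnIn S ⟨q, h⟩ a}

variable {S : Set Q}

theorem zigzagComponent_subset (a : S) : zigzagComponent S a ⊆ S :=
  fun _ hq => hq.1

theorem mem_zigzagComponent_self (a : S) : (a : Q) ∈ zigzagComponent S a :=
  ⟨a.2, Relation.ReflTransGen.refl⟩

theorem mem_zigzagComponent_of_step {a : S} {x y : Q} (hx : x ∈ zigzagComponent S a)
    (hy : y ∈ S) (hxy : x ≤ y ∨ y ≤ x) : y ∈ zigzagComponent S a :=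
  ⟨hy, Relation.ReflTransGen.head (r := fun u v : S => (u : Q) ≤ v ∨ (v : Q) ≤ u)
    (b := ⟨x, hx.1⟩) hxy.symm hx.2⟩

theorem zigzagComponent_eq_of_mem {a b : S} (h : (a : Q) ∈ zigzagComponent S b) :
    zigzagComponent S a = zigzagComponent S b := by
  ext q
  exact ⟨fun ⟨hq, hqa⟩ => ⟨hq, hqa.trans h.2⟩, fun ⟨hq, hqb⟩ => ⟨hq, hqb.trans h.2.symm⟩⟩

theorem isIntervalSet_zigzagComponent (hS : IsConvex S) (a : S) :
    IsIntervalSet (zigzagComponent S a) := by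
  refine ⟨⟨a, mem_zigzagComponent_self a⟩, ?_, ?_⟩
  · intro x y z hx hy hxz hzy
    exact mem_zigzagComponent_of_step hy (hS hx.1 hy.1 hxz hzy) (Or.inr hzy)
  · rintro ⟨x, hxS, hxa⟩ ⟨y, hyS, hya⟩
    exact (ZigzagConnIn.restrict (fun _ _ => mem_zigzagComponent_of_step) (hxa.trans hya.symm)
      ⟨hxS, hxa⟩).2

end ZigzagComponents

section IndicatorHom

variable (k : Type) [Field k] {Q : Type} [PartialOrder Q]

open Classical in
noncomputable def indicatorMap (c d : Prop) :
    ↥(if c then (⊤ : Submodule k k) else ⊥) →ₗ[k] ↥(if d then (⊤ : Submodule k k) else ⊥) where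
  toFun x := ⟨(if c ∧ d then (1 : k) else 0) * x.1, by
    by_cases h : d
    · rw [if_pos h]; exact Submodule.mem_top
    · rw [if_neg h, Submodule.mem_bot]; simp [h]⟩
  map_add' x y := by ext; simp [mul_add]
  map_smul' r x := by ext; simp

noncomputable def indicatorHom {A B : Set Q} (hA : IsConvex A) (hB : IsConvex B) (p q : Q) :
    (intervalModule k A hA).obj p ⟶ (intervalModule k B hB).obj q :=
  ModuleCat.ofHom (indicatorMap k (p ∈ A) (q ∈ B))

variable {k} {A B C : Set Q} (hA : IsConvex A) (hB : IsConvex B) (hC : IsConvex C)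

theorem intervalModule_map {p q : Q} (f : p ⟶ q) :
    (intervalModule k A hA).map f = indicatorHom k hA hA p q :=
  rfl

open Classical in
theorem isZero_intervalModule_obj {q : Q} (hq : q ∉ A) :
    IsZero ((intervalModule k A hA).obj q) := by
  have : Subsingleton ↥(if q ∈ A then (⊤ : Submodule k k) else ⊥) := by
    rw [if_neg hq]; infer_instance
  exact @ModuleCat.isZero_of_subsingleton _ _ _ this

open Classical in
theorem indicatorHom_comp {p q r : Q} (h : p ∈ A → r ∈ C → q ∈ B) :
    indicatorHom k hA hB p q ≫ indicatorHom k hB hC q r = indicatorHom k hA hC p r := by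
  ext ⟨x, hx⟩
  apply Subtype.ext
  change (if q ∈ B ∧ r ∈ C then (1 : k) else 0) * ((if p ∈ A ∧ q ∈ B then (1 : k) else 0) * x)
    = (if p ∈ A ∧ r ∈ C then (1 : k) else 0) * x
  by_cases hp : p ∈ A
  · by_cases hr : r ∈ C
    · simp [hp, hr, h hp hr]
    · simp [hr]
  · have hx0 : x = 0 := by
      rw [if_neg hp, Submodule.mem_bot] at hx
      exact hx
    simp [hx0]

theorem indicatorHom_self (q : Q) : indicatorHom k hA hA q q = 𝟙 _ :=
  (intervalModule_map hA (𝟙 q)).symm.trans ((intervalModule k A hA).map_id q)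

theorem indicatorHom_comp_eq_zero {p q r : Q} (hq : q ∉ B) :
    indicatorHom k hA hB p q ≫ indicatorHom k hB hC q r = 0 := by
  rw [(isZero_intervalModule_obj hB hq).eq_of_tgt (indicatorHom k hA hB p q) 0, zero_comp]

theorem isIso_intervalModule_map {p q : Q} (f : p ⟶ q) (hp : p ∈ A) (hq : q ∈ A) :
    IsIso ((intervalModule k A hA).map f) :=
  ⟨indicatorHom k hA hA q p,
    (indicatorHom_comp hA hA hA fun _ _ => hq).trans (indicatorHom_self hA p),
    (indicatorHom_comp hA hA hA fun _ _ => hp).trans (indicatorHom_self hA q)⟩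

end IndicatorHom

section IntervalModules

variable (k : Type) [Field k] {Q : Type} [PartialOrder Q]

noncomputable def intervalModuleHom {A B : Set Q} (hA : IsConvex A) (hB : IsConvex B)
    (h : ∀ ⦃p q⦄, p ≤ q → p ∈ A → q ∈ B → q ∈ A ∧ p ∈ B) :
    intervalModule k A hA ⟶ intervalModule k B hB where
  app q := indicatorHom k hA hB q q
  naturality _ _ f :=
    (indicatorHom_comp hA hA hB fun hp hq => (h (leOfHom f) hp hq).1).trans
      (indicatorHom_comp hA hB hB fun hp hq => (h (leOfHom f) hp hq).2).symm

variable {k}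

theorem intervalModuleHom_app {A B : Set Q} (hA : IsConvex A) (hB : IsConvex B) (h) (q : Q) :
    (intervalModuleHom k hA hB h).app q = indicatorHom k hA hB q q :=
  rfl

theorem exists_lift_of_isConvex [Finite Q] {X M : Q ⥤ ModuleCat.{0} k} (f : X ⟶ M)
    (hf : ∀ (S : Set Q) (hS : IsIntervalSet S) (g : intervalModule k S hS.2.1 ⟶ M),
      ∃ h, h ≫ f = g)
    {U : Set Q} (hU : IsConvex U) (g : intervalModule k U hU ⟶ M) : ∃ h, h ≫ f = g := by
  classical
  let ι := Set.range (zigzagComponent U)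
  have := Fintype.ofFinite ι
  have hι : ∀ i : ι, IsIntervalSet i.1 ∧ i.1 ⊆ U ∧
      ∀ ⦃x y⦄, x ∈ i.1 → y ∈ U → (x ≤ y ∨ y ≤ x) → y ∈ i.1 := by
    rintro ⟨_, a, rfl⟩
    exact ⟨isIntervalSet_zigzagComponent hU a, zigzagComponent_subset a,
      fun _ _ => mem_zigzagComponent_of_step⟩
  refine exists_lift_of_sum_comp_eq_id f
    (fun i => intervalModuleHom k hU (hι i).1.2.1
      fun _ _ hpq hp hq => ⟨(hι i).2.1 hq, (hι i).2.2 hq hp (Or.inr hpq)⟩)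
    (fun i => intervalModuleHom k (hι i).1.2.1 hU
      fun _ _ hpq hp hq => ⟨(hι i).2.2 hp hq (Or.inl hpq), (hι i).2.1 hp⟩)
    ?_ g (fun i => hf _ (hι i).1 _)
  ext q : 2
  rw [NatTrans.app_sum]
  simp only [NatTrans.comp_app, intervalModuleHom_app]
  by_cases hq : q ∈ U
  · rw [Finset.sum_eq_single ⟨_, ⟨q, hq⟩, rfl⟩,
      indicatorHom_comp _ _ _ fun _ _ => mem_zigzagComponent_self _, indicatorHom_self]
    · rfl
    · rintro ⟨_, a, rfl⟩ _ hne
      refine indicatorHom_comp_eq_zero _ _ _ fun hqa => hne ?_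
      exact Subtype.ext (zigzagComponent_eq_of_mem (a := ⟨q, hq⟩) hqa).symm
    · exact fun h => absurd (Finset.mem_univ _) h
  · exact (isZero_intervalModule_obj hU hq).eq_of_src _ _

theorem IsIntervalModule.isIntervalDecomposable {M : Q ⥤ ModuleCat.{0} k}
    (h : IsIntervalModule k M) : IsIntervalDecomposable k M := by
  refine ⟨1, fun _ => M, fun _ => h, ⟨biproduct.lift fun _ => 𝟙 M, biproduct.π _ 0, by simp, ?_⟩⟩
  ext j : 1
  fin_cases j
  simp

theorem exists_lift_of_isIntervalDecomposable {X M Y : Q ⥤ ModuleCat.{0} k} (f : X ⟶ M)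
    (hf : ∀ (S : Set Q) (hS : IsIntervalSet S) (g : intervalModule k S hS.2.1 ⟶ M),
      ∃ h, h ≫ f = g)
    (hY : IsIntervalDecomposable k Y) (g : Y ⟶ M) : ∃ h, h ≫ f = g := by
  obtain ⟨n, J, hJ, ⟨e⟩⟩ := hY
  refine exists_lift_of_sum_comp_eq_id f (fun i => e.hom ≫ biproduct.π J i)
    (fun i => biproduct.ι J i ≫ e.inv) ?_ g fun i => ?_
  · simp only [Category.assoc, ← Preadditive.comp_sum]
    simp only [← Category.assoc, ← Preadditive.sum_comp, biproduct.total, Category.comp_id,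
      Iso.hom_inv_id]
  · obtain ⟨S, hS, ⟨eJ⟩⟩ := hJ i
    obtain ⟨h, hh⟩ := hf S hS (eJ.inv ≫ biproduct.ι J i ≫ e.inv ≫ g)
    exact ⟨eJ.hom ≫ h, by simp [hh]⟩

theorem exists_intervalModuleHom_comp_eq {S T : Set Q} (hS : IsConvex S) (hT : IsConvex T)
    (hTS : T ⊆ S) (hdown : ∀ ⦃p q⦄, p ≤ q → p ∈ S → q ∈ T → p ∈ T)
    {N : Q ⥤ ModuleCat.{0} k} (g : intervalModule k S hS ⟶ N) (hg : ∀ q ∉ T, g.app q = 0) :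
    ∃ g' : intervalModule k T hT ⟶ N,
      intervalModuleHom k hS hT (fun _ _ hpq hp hq => ⟨hTS hq, hdown hpq hp hq⟩) ≫ g' = g := by
  refine ⟨{ app := fun q => indicatorHom k hT hS q q ≫ g.app q, naturality := ?_ }, ?_⟩
  · intro p q f
    rw [Category.assoc, ← g.naturality, ← Category.assoc, ← Category.assoc]
    by_cases hq : q ∈ T
    · rw [intervalModule_map, intervalModule_map, indicatorHom_comp _ _ _ fun _ _ => hq,
        indicatorHom_comp _ _ _ fun hp _ => hTS hp]
    · rw [hg q hq, comp_zero, comp_zero]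
  · ext q : 2
    simp only [NatTrans.comp_app, intervalModuleHom_app, ← Category.assoc]
    by_cases hq : q ∈ T
    · rw [indicatorHom_comp _ _ _ fun _ _ => hq, indicatorHom_self, Category.id_comp]
    · rw [hg q hq, comp_zero]

theorem intervalModule_congr {S T : Set Q} (hS : IsConvex S) (hT : IsConvex T) (h : S = T) :
    intervalModule k S hS = intervalModule k T hT := by
  subst h
  rfl

end IntervalModules

section ExtendByZero

variable {k : Type} [Field k] {P : Type} [PartialOrder P] {P' : Set P} (hconv : IsConvex P')

theorem extendByZero_obj_of_mem (M : ↥P' ⥤ ModuleCat.{0} k) {p : P} (hp : p ∈ P') :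
    (extendByZero k P' hconv M).obj p = M.obj ⟨p, hp⟩ :=
  extObj_pos k P' M hp

theorem isZero_extendByZero_obj (M : ↥P' ⥤ ModuleCat.{0} k) {p : P} (hp : p ∉ P') :
    IsZero ((extendByZero k P' hconv M).obj p) :=
  extObj_isZero k P' M hp

theorem extendByZero_map_of_mem {M : ↥P' ⥤ ModuleCat.{0} k} {p q : P} (f : p ⟶ q)
    (hp : p ∈ P') (hq : q ∈ P') :
    (extendByZero k P' hconv M).map f = eqToHom (extendByZero_obj_of_mem hconv M hp) ≫
      M.map (homOfLE (show (⟨p, hp⟩ : ↥P') ≤ ⟨q, hq⟩ from leOfHom f)) ≫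
        eqToHom (extendByZero_obj_of_mem hconv M hq).symm := by
  simp only [extendByZero, extMap, dif_pos hp, dif_pos hq]

theorem extendByZeroHom_app_of_mem {X M : ↥P' ⥤ ModuleCat.{0} k} (f : X ⟶ M) {p : P}
    (hp : p ∈ P') :
    (extendByZeroHom k P' hconv f).app p = eqToHom (extendByZero_obj_of_mem hconv X hp) ≫
      f.app ⟨p, hp⟩ ≫ eqToHom (extendByZero_obj_of_mem hconv M hp).symm :=
  dif_pos hp

variable (k P') in
noncomputable abbrev extendByZeroFunctor : (↥P' ⥤ ModuleCat.{0} k) ⥤ (P ⥤ ModuleCat.{0} k) where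
  obj := extendByZero k P' hconv
  map := extendByZeroHom k P' hconv
  map_id M := by
    ext p : 2
    by_cases hp : p ∈ P'
    · simp [extendByZeroHom_app_of_mem hconv _ hp]
    · exact (isZero_extendByZero_obj hconv M hp).eq_of_src _ _
  map_comp {_ _ M} f g := by
    ext p : 2
    by_cases hp : p ∈ P'
    · simp [extendByZeroHom_app_of_mem hconv _ hp]
    · exact (isZero_extendByZero_obj hconv M hp).eq_of_tgt _ _

theorem extendByZeroFunctor_map {X M : ↥P' ⥤ ModuleCat.{0} k} (f : X ⟶ M) :
    (extendByZeroFunctor k P' hconv).map f = extendByZeroHom k P' hconv f :=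
  rfl

instance : (extendByZeroFunctor k P' hconv).Additive where
  map_add {_ M f g} := by
    ext p : 2
    change (extendByZeroHom k P' hconv (f + g)).app p =
      (extendByZeroHom k P' hconv f).app p + (extendByZeroHom k P' hconv g).app p
    by_cases hp : p ∈ P'
    · simp [extendByZeroHom_app_of_mem hconv _ hp]
    · exact (isZero_extendByZero_obj hconv M hp).eq_of_tgt _ _

variable (P') in
abbrev subposetInclusion : ↥P' ⥤ P := (Subtype.mono_coe (· ∈ P')).functor

noncomputable def restrictExtendByZeroIso (M : ↥P' ⥤ ModuleCat.{0} k) :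
    subposetInclusion P' ⋙ extendByZero k P' hconv M ≅ M :=
  NatIso.ofComponents (fun q => eqToIso (extendByZero_obj_of_mem hconv M q.2)) fun {q r} f => by
    change (extendByZero k P' hconv M).map (homOfLE (leOfHom f) : q.1 ⟶ r.1) ≫ _ = _
    simp [extendByZero_map_of_mem hconv _ q.2 r.2]
    rfl

@[simp]
theorem restrictExtendByZeroIso_hom_app (M : ↥P' ⥤ ModuleCat.{0} k) (q : ↥P') :
    (restrictExtendByZeroIso hconv M).hom.app q = eqToHom (extendByZero_obj_of_mem hconv M q.2) :=
  rfl

@[simp]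
theorem restrictExtendByZeroIso_inv_app (M : ↥P' ⥤ ModuleCat.{0} k) (q : ↥P') :
    (restrictExtendByZeroIso hconv M).inv.app q =
      eqToHom (extendByZero_obj_of_mem hconv M q.2).symm :=
  rfl

noncomputable def extendByZeroFunctor.fullyFaithful :
    (extendByZeroFunctor k P' hconv).FullyFaithful where
  preimage {X M} φ := (restrictExtendByZeroIso hconv X).inv ≫
    Functor.whiskerLeft (subposetInclusion P') φ ≫ (restrictExtendByZeroIso hconv M).hom
  map_preimage {X M} φ := by
    ext p : 2
    by_cases hp : p ∈ P'
    · simp [extendByZeroHom_app_of_mem hconv _ hp]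
    · exact (isZero_extendByZero_obj hconv M hp).eq_of_tgt _ _
  preimage_map {X M} f := by
    ext q : 2
    simp [extendByZeroHom_app_of_mem hconv _ q.2]

end ExtendByZero

section Subposet

variable {P : Type} [PartialOrder P] {P' : Set P}

theorem IsConvex.preimage_val {T : Set P} (hT : IsConvex T) :
    IsConvex (Subtype.val ⁻¹' T : Set ↥P') :=
  fun _ _ _ hx hy hxz hzy => hT hx hy hxz hzy

theorem IsConvex.image_val {S : Set ↥P'} (hS : IsConvex S) (hconv : IsConvex P') :
    IsConvex (Subtype.val '' S) := by
  rintro _ _ z ⟨x, hx, rfl⟩ ⟨y, hy, rfl⟩ hxz hzy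
  exact ⟨⟨z, hconv x.2 y.2 hxz hzy⟩, hS hx hy hxz hzy, rfl⟩

theorem IsIntervalSet.image_val {S : Set ↥P'} (hS : IsIntervalSet S) (hconv : IsConvex P') :
    IsIntervalSet (Subtype.val '' S) := by
  obtain ⟨⟨a, ha⟩, hSconv, hSconn⟩ := hS
  refine ⟨⟨a, a, ha, rfl⟩, hSconv.image_val hconv, ?_⟩
  rintro ⟨_, x, hx, rfl⟩ ⟨_, y, hy, rfl⟩
  exact Relation.ReflTransGen.lift (p := fun u v : ↥(Subtype.val '' S) => (u : P) ≤ v ∨ (v : P) ≤ u)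
    (fun z : S => ⟨z.1.1, z.1, z.2, rfl⟩) (fun _ _ h => h) _ _ (hSconn ⟨x, hx⟩ ⟨y, hy⟩)

end Subposet

section ExtendByZeroIntervalModule

variable {k : Type} [Field k] {P : Type} [PartialOrder P] {P' : Set P} (hconv : IsConvex P')

theorem extendByZero_restrict_obj_of_mem (N : P ⥤ ModuleCat.{0} k) {p : P} (hp : p ∈ P') :
    (extendByZero k P' hconv (subposetInclusion P' ⋙ N)).obj p = N.obj p :=
  extendByZero_obj_of_mem hconv _ hp

theorem extendByZero_restrict_map_of_mem (N : P ⥤ ModuleCat.{0} k) {p q : P} (f : p ⟶ q)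
    (hp : p ∈ P') (hq : q ∈ P') :
    (extendByZero k P' hconv (subposetInclusion P' ⋙ N)).map f =
      eqToHom (extendByZero_restrict_obj_of_mem hconv N hp) ≫ N.map f ≫
        eqToHom (extendByZero_restrict_obj_of_mem hconv N hq).symm :=
  extendByZero_map_of_mem hconv f hp hq

open Classical in
noncomputable def isoExtendByZeroOfIsZero (N : P ⥤ ModuleCat.{0} k)
    (hN : ∀ p ∉ P', IsZero (N.obj p)) :
    N ≅ extendByZero k P' hconv (subposetInclusion P' ⋙ N) :=
  NatIso.ofComponents
    (fun p => if hp : p ∈ P' then eqToIso (extendByZero_restrict_obj_of_mem hconv N hp).symm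
      else (hN p hp).iso (isZero_extendByZero_obj hconv _ hp))
    fun {p q} f => by
      by_cases hq : q ∈ P'
      · by_cases hp : p ∈ P'
        · simp [dif_pos hp, dif_pos hq, extendByZero_restrict_map_of_mem hconv N f hp hq]
        · exact (hN p hp).eq_of_src _ _
      · exact (isZero_extendByZero_obj hconv _ hq).eq_of_tgt _ _

noncomputable def extendByZeroIntervalModuleIso {S : Set ↥P'} (hS : IsConvex S) :
    extendByZero k P' hconv (intervalModule k S hS) ≅
      intervalModule k (Subtype.val '' S) (hS.image_val hconv) :=
  (extendByZeroFunctor k P' hconv).mapIso (eqToIso (intervalModule_congr hS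
      (hS.image_val hconv).preimage_val (Set.preimage_image_eq S Subtype.val_injective).symm)) ≪≫
    (isoExtendByZeroOfIsZero hconv _ fun _ hp => isZero_intervalModule_obj _ fun hpS => by
      obtain ⟨q, _, rfl⟩ := hpS
      exact hp q.2).symm

theorem isIntervalDecomposable_extendByZero {X : ↥P' ⥤ ModuleCat.{0} k}
    (hX : IsIntervalDecomposable k X) : IsIntervalDecomposable k (extendByZero k P' hconv X) := by
  obtain ⟨n, J, hJ, ⟨e⟩⟩ := hX
  refine ⟨n, fun i => extendByZero k P' hconv (J i), fun i => ?_,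
    ⟨(extendByZeroFunctor k P' hconv).mapIso e ≪≫ (extendByZeroFunctor k P' hconv).mapBiproduct J⟩⟩
  obtain ⟨S, hS, ⟨eJ⟩⟩ := hJ i
  exact ⟨_, hS.image_val hconv,
    ⟨(extendByZeroFunctor k P' hconv).mapIso eJ ≪≫ extendByZeroIntervalModuleIso hconv hS.2.1⟩⟩

end ExtendByZeroIntervalModule

section Approximation

variable {k : Type} [Field k] {P : Type} [PartialOrder P] {P' : Set P} (hconv : IsConvex P')

def downClosedCore (S P' : Set P) : Set P :=
  {p | p ∈ S ∧ ∀ r ∈ S, r ≤ p → r ∈ P'}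

theorem downClosedCore_subset_left {S : Set P} : downClosedCore S P' ⊆ S :=
  fun _ hp => hp.1

theorem downClosedCore_subset_right {S : Set P} : downClosedCore S P' ⊆ P' :=
  fun p hp => hp.2 p hp.1 le_rfl

theorem IsConvex.downClosedCore {S : Set P} (hS : IsConvex S) :
    IsConvex (downClosedCore S P') :=
  fun _ _ _ hx hy hxz hzy =>
    ⟨hS hx.1 hy.1 hxz hzy, fun r hr hrz => hy.2 r hr (hrz.trans hzy)⟩

theorem app_eq_zero_of_not_mem_downClosedCore {S : Set P} (hS : IsConvex S)
    {M : ↥P' ⥤ ModuleCat.{0} k} (g : intervalModule k S hS ⟶ extendByZero k P' hconv M) {q : P}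
    (hq : q ∉ downClosedCore S P') : g.app q = 0 := by
  by_cases hqS : q ∈ S
  · obtain ⟨r, hrS, hrq, hrP⟩ : ∃ r ∈ S, r ≤ q ∧ r ∉ P' := by
      by_contra! h
      exact hq ⟨hqS, h⟩
    have := isIso_intervalModule_map (k := k) hS (homOfLE hrq) hrS hqS
    rw [← cancel_epi ((intervalModule k S hS).map (homOfLE hrq)), g.naturality,
      (isZero_extendByZero_obj hconv M hrP).eq_of_tgt (g.app r) 0, zero_comp, comp_zero]
  · exact (isZero_intervalModule_obj hS hqS).eq_of_src _ _

theorem exists_lift_intervalModule_extendByZero [Finite P] {X M : ↥P' ⥤ ModuleCat.{0} k}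
    (f : X ⟶ M)
    (hf : ∀ (U : Set ↥P') (hU : IsIntervalSet U) (g : intervalModule k U hU.2.1 ⟶ M),
      ∃ h, h ≫ f = g)
    {S : Set P} (hS : IsConvex S) (g : intervalModule k S hS ⟶ extendByZero k P' hconv M) :
    ∃ h, h ≫ extendByZeroHom k P' hconv f = g := by
  have hT : IsConvex (downClosedCore S P') := hS.downClosedCore
  have hdown : ∀ ⦃p q⦄, p ≤ q → p ∈ S → q ∈ downClosedCore S P' → p ∈ downClosedCore S P' :=
    fun _ _ hpq hp hq => ⟨hp, fun r hr hrp => hq.2 r hr (hrp.trans hpq)⟩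
  obtain ⟨g₁, rfl⟩ := exists_intervalModuleHom_comp_eq hS hT downClosedCore_subset_left hdown g
    (fun _ hq => app_eq_zero_of_not_mem_downClosedCore hconv hS g hq)
  let e := isoExtendByZeroOfIsZero hconv (intervalModule k _ hT) fun _ hp =>
    isZero_intervalModule_obj hT fun hpT => hp (downClosedCore_subset_right hpT)
  let hE := extendByZeroFunctor.fullyFaithful (k := k) hconv
  obtain ⟨h, hh⟩ : ∃ h : subposetInclusion P' ⋙ intervalModule k _ hT ⟶ X,
      h ≫ f = hE.preimage (e.inv ≫ g₁) :=
    exists_lift_of_isConvex f hf hT.preimage_val _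
  have key : e.hom ≫ extendByZeroHom k P' hconv h ≫ extendByZeroHom k P' hconv f = g₁ := by
    rw [← extendByZeroFunctor_map, ← extendByZeroFunctor_map, ← Functor.map_comp, hh,
      hE.map_preimage, Iso.hom_inv_id_assoc]
  exact ⟨_, (Category.assoc _ _ _).trans (congrArg _ ((Category.assoc _ _ _).trans key))⟩

end Approximation

theorem intervalCover_extendByZero_general
    (k : Type) [Field k] (P : Type) [PartialOrder P] [Finite P]
    (P' : Set P) (hconv : IsConvex P')
    (X M : ↥P' ⥤ ModuleCat.{0} k)
    (f : X ⟶ M) (hf : IsIntervalCover k f) :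
    IsIntervalCover k (extendByZeroHom k P' hconv f) := by
  obtain ⟨⟨hX, hlift⟩, hmin⟩ := hf
  let hE := extendByZeroFunctor.fullyFaithful (k := k) hconv
  refine ⟨⟨isIntervalDecomposable_extendByZero hconv hX, fun Y g hY => ?_⟩, fun φ hφ => ?_⟩
  · refine exists_lift_of_isIntervalDecomposable _ (fun S hS g => ?_) hY g
    exact exists_lift_intervalModule_extendByZero hconv f
      (fun U hU g => hlift g (IsIntervalModule.isIntervalDecomposable ⟨U, hU, ⟨Iso.refl _⟩⟩))
      hS.2.1 g
  · obtain ⟨ψ, rfl⟩ := hE.map_surjective φ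
    have : IsIso ψ := hmin ψ (hE.map_injective (by rwa [Functor.map_comp]))
    exact Functor.map_isIso _ ψ

/-- If `f : X ⟶ M` is an interval cover over a convex full subposet `P'`
of `P`, then its extension by zero is an interval cover over `P`. -/
theorem intervalCover_extendByZero
    (k : Type) [Field k] (P : Type) [PartialOrder P] [Finite P]
    (P' : Set P) (hconv : IsConvex P')
    (X M : ↥P' ⥤ ModuleCat.{0} k) (hM : PointwiseFinite k M)
    (f : X ⟶ M) (hf : IsIntervalCover k f) :
    IsIntervalCover k (extendByZeroHom k P' hconv f) :=
  intervalCover_extendByZero_general k P P' hconv X M f hf
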